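/- Pythagorean identity for projection along a mode: assume L = c·W where c ∈ ℂ is nonzero and W : ℂ^p → ℂ^p is unitary for the standard Hermitian inner product. Let A ∈ ℂ_p^{I₁×⋯×I_N} be a tubal tensor of order N and Ŭ ∈ ℂ_p^{I_n×R} (I_n ≥ R) a partially unitary tubal matrix. Then ‖A *_n (Ŭ*Ŭ^H)‖² + ‖A *_n (𝓘 − Ŭ*Ŭ^H)‖² = ‖A‖²; in particular ‖A *_n (Ŭ*Ŭ^H)‖ ≤ ‖A‖. -/

import Mathlib

/-!
Because `L = c • W` with `W` unitary, `|c|² ‖X‖² = Σ_k Σ_i |L(X i)_k|²`, so every norm can be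
computed in the transform domain. There the t-product acts slice by slice as the ordinary matrix
product, and slice `k` of `L(A *_n M)` is obtained by multiplying each mode-`n` fibre of slice `k`
of `L(A)` by the slice `L(M)^{(k)}`. For `M = Ŭ*Ŭ^H` that slice is `U Uᴴ` with `Uᴴ U = 1`, an
orthogonal projection `P`, so every fibre `v` satisfies `‖P v‖² + ‖(1 - P) v‖² = ‖v‖²`; summing
over fibres and slices gives the identity, and the inequality follows.
-/

open scoped BigOperators

/-- Tubal scalars of length `p`: vectors in `ℂ^p`. -/
abbrev TubalScalar (p : ℕ) := Fin p → ℂ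

variable {p : ℕ}

/-- Tensor-tensor product of tubal scalars with respect to the invertible
linear transformation `L`: `a * b := L⁻¹(L a ⊙ L b)`. -/
noncomputable def tmul (L : TubalScalar p ≃ₗ[ℂ] TubalScalar p) (a b : TubalScalar p) :
    TubalScalar p :=
  L.symm (L a * L b)

/-- Tensor-tensor product of tubal matrices: `(A*B)(i,k) := Σ_j A(i,j)*B(j,k)`. -/
noncomputable def tMul {I J K : Type*} [Fintype J] (L : TubalScalar p ≃ₗ[ℂ] TubalScalar p)
    (A : I → J → TubalScalar p) (B : J → K → TubalScalar p) : I → K → TubalScalar p :=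
  fun i k => ∑ j, tmul L (A i j) (B j k)

/-- The `n`-mode product of a tubal tensor `A` of shape `I : Fin N → ℕ` with a tubal
matrix `U ∈ ℂ_p^{J×I_n}`:
`(A *_n U)(i₁,…,i_{n−1},j,i_{n+1},…,i_N) = Σ_{i_n} A(i₁,…,i_N)*U(j,i_n)`. -/
noncomputable def modeProd {N : ℕ} (L : TubalScalar p ≃ₗ[ℂ] TubalScalar p) (I : Fin N → ℕ)
    (A : ((m : Fin N) → Fin (I m)) → TubalScalar p) (n : Fin N) (J : ℕ)
    (U : Fin J → Fin (I n) → TubalScalar p) :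
    ((m : Fin N) → Fin (Function.update I n J m)) → TubalScalar p :=
  fun idx => ∑ i : Fin (I n),
    tmul L
      (A fun m =>
        if h : m = n then Fin.cast (congrArg I h).symm i
        else Fin.cast (by rw [Function.update_of_ne h]) (idx m))
      (U (Fin.cast (by rw [Function.update_self]) (idx n)) i)
/-- Hermitian transpose: `(L(A^H))^{(k)} = (L(A)^{(k)})^H`, i.e. entrywise
`A^H(j,i) = L⁻¹(conj(L(A(i,j))))`. -/
noncomputable def tHerm {I J : Type*} (L : TubalScalar p ≃ₗ[ℂ] TubalScalar p)
    (A : I → J → TubalScalar p) : J → I → TubalScalar p :=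
  fun j i => L.symm (star (L (A i j)))

/-- The identity tubal matrix: `e = L⁻¹((1,…,1))` on the diagonal, zero elsewhere. -/
noncomputable def tId {I : Type*} [DecidableEq I] (L : TubalScalar p ≃ₗ[ℂ] TubalScalar p) :
    I → I → TubalScalar p :=
  fun i j => if i = j then L.symm 1 else 0

/-- A square tubal matrix is unitary if `A*A^H = A^H*A = 𝓘`. -/
noncomputable def tUnitary {I : Type*} [Fintype I] [DecidableEq I]
    (L : TubalScalar p ≃ₗ[ℂ] TubalScalar p) (A : I → I → TubalScalar p) : Prop :=
  tMul L A (tHerm L A) = tId L ∧ tMul L (tHerm L A) A = tId L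

/-- The Frobenius norm: the square root of the sum, over all positions and all `p`
components, of the squared absolute values of the components. -/
noncomputable def tnorm {ι : Type*} [Fintype ι] (X : ι → TubalScalar p) : ℝ :=
  Real.sqrt (∑ i : ι, ∑ k : Fin p, ‖X i k‖ ^ 2)

open scoped Matrix InnerProductSpace

namespace Matrix

theorem isStarProjection_mul_conjTranspose {κ ρ α : Type*} [Fintype κ] [Fintype ρ]
    [DecidableEq ρ] [Semiring α] [StarRing α] {U : Matrix κ ρ α} (hU : Uᴴ * U = 1) :
    IsStarProjection (U * Uᴴ) where
  isIdempotentElem := by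
    rw [IsIdempotentElem, Matrix.mul_assoc, ← Matrix.mul_assoc Uᴴ, hU, Matrix.one_mul]
  isSelfAdjoint := by
    rw [IsSelfAdjoint, star_eq_conjTranspose, conjTranspose_mul, conjTranspose_conjTranspose]

theorem sum_norm_sq_mulVec_add_sum_norm_sq_one_sub_mulVec {κ 𝕜 : Type*} [Fintype κ]
    [DecidableEq κ] [RCLike 𝕜] {P : Matrix κ κ 𝕜} (hP : IsStarProjection P) (v : κ → 𝕜) :
    ∑ j, ‖(P *ᵥ v) j‖ ^ 2 + ∑ j, ‖((1 - P) *ᵥ v) j‖ ^ 2 = ∑ j, ‖v j‖ ^ 2 := by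
  have hPH : Pᴴ = P := hP.isSelfAdjoint
  have horth : ⟪WithLp.toLp 2 (P *ᵥ v), WithLp.toLp 2 ((1 - P) *ᵥ v)⟫_𝕜 = 0 := by
    rw [EuclideanSpace.inner_toLp_toLp, dotProduct_comm, star_mulVec, ← dotProduct_mulVec,
      mulVec_mulVec, hPH, Matrix.mul_sub, Matrix.mul_one, hP.isIdempotentElem.eq, sub_self,
      zero_mulVec, dotProduct_zero]
  have h := norm_add_sq_eq_norm_sq_add_norm_sq_of_inner_eq_zero _ _ horth
  rw [← WithLp.toLp_add, ← add_mulVec, add_sub_cancel, one_mulVec] at h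
  simpa only [← sq, EuclideanSpace.norm_sq_eq] using h.symm

end Matrix

section FrontalSlice

variable (L : TubalScalar p ≃ₗ[ℂ] TubalScalar p)

/-- The frontal slice `L(A)^{(k)}`. -/
def frontalSlice {I J : Type*} (A : I → J → TubalScalar p) (k : Fin p) : Matrix I J ℂ :=
  Matrix.of fun i j => L (A i j) k

theorem apply_tmul (a b : TubalScalar p) : L (tmul L a b) = L a * L b :=
  L.apply_symm_apply _

theorem frontalSlice_tMul {I J K : Type*} [Fintype J] (A : I → J → TubalScalar p)
    (B : J → K → TubalScalar p) (k : Fin p) :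
    frontalSlice L (tMul L A B) k = frontalSlice L A k * frontalSlice L B k := by
  ext i l
  simp [frontalSlice, tMul, Matrix.mul_apply, apply_tmul]

theorem frontalSlice_tHerm {I J : Type*} (A : I → J → TubalScalar p) (k : Fin p) :
    frontalSlice L (tHerm L A) k = (frontalSlice L A k)ᴴ := by
  ext j i
  simp [frontalSlice, tHerm]

theorem frontalSlice_tId {I : Type*} [DecidableEq I] (k : Fin p) :
    frontalSlice L (tId L : I → I → TubalScalar p) k = 1 := by
  ext i j
  by_cases h : i = j <;> simp [frontalSlice, tId, Matrix.one_apply, h]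

theorem frontalSlice_sub {I J : Type*} (A B : I → J → TubalScalar p) (k : Fin p) :
    frontalSlice L (A - B) k = frontalSlice L A k - frontalSlice L B k := by
  ext i j
  simp [frontalSlice]

theorem isStarProjection_frontalSlice_tMul_tHerm {I R : Type*} [Fintype I] [Fintype R]
    [DecidableEq R] {U : I → R → TubalScalar p} (hU : tMul L (tHerm L U) U = tId L)
    (k : Fin p) : IsStarProjection (frontalSlice L (tMul L U (tHerm L U)) k) := by
  rw [frontalSlice_tMul, frontalSlice_tHerm]
  refine Matrix.isStarProjection_mul_conjTranspose ?_
  rw [← frontalSlice_tHerm, ← frontalSlice_tMul, hU, frontalSlice_tId]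

end FrontalSlice

theorem sum_norm_sq_apply_eq_of_inner_eq {W : TubalScalar p → TubalScalar p}
    (hW : ∀ x y : TubalScalar p, ∑ k, star (W x k) * W y k = ∑ k, star (x k) * y k)
    (x : TubalScalar p) : ∑ k, ‖W x k‖ ^ 2 = ∑ k, ‖x k‖ ^ 2 := by
  have h := hW x x
  simp only [RCLike.star_def, Complex.conj_mul'] at h
  exact_mod_cast h

theorem tnorm_nonneg {ι : Type*} [Fintype ι] (X : ι → TubalScalar p) : 0 ≤ tnorm X :=
  Real.sqrt_nonneg _

theorem sq_norm_mul_tnorm_sq {ι : Type*} [Fintype ι] {L W : TubalScalar p → TubalScalar p}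
    {c : ℂ}
    (hW : ∀ x y : TubalScalar p, ∑ k, star (W x k) * W y k = ∑ k, star (x k) * y k)
    (hLW : ∀ x, L x = c • W x) (X : ι → TubalScalar p) :
    ‖c‖ ^ 2 * tnorm X ^ 2 = ∑ k, ∑ i, ‖L (X i) k‖ ^ 2 := by
  have hL : ∀ x, ∑ k, ‖L x k‖ ^ 2 = ‖c‖ ^ 2 * ∑ k, ‖x k‖ ^ 2 := fun x => by
    simp only [hLW, Pi.smul_apply, smul_eq_mul, norm_mul, mul_pow, ← Finset.mul_sum,
      sum_norm_sq_apply_eq_of_inner_eq hW]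
  rw [Finset.sum_comm, tnorm, Real.sq_sqrt (by positivity), Finset.mul_sum]
  exact Finset.sum_congr rfl fun i _ => (hL (X i)).symm

section ModeProduct

variable {N : ℕ} (I : Fin N → ℕ) (n : Fin N)

def modeProdIndexEquiv (J : ℕ) :
    ((m : Fin N) → Fin (Function.update I n J m)) ≃ Fin J × ((m : {m // m ≠ n}) → Fin (I m)) :=
  (Equiv.piSplitAt n _).trans <| Equiv.prodCongr (finCongr (Function.update_self n J I))
    (Equiv.piCongrRight fun m => finCongr (Function.update_of_ne m.2 J I))

def modeFibre (A : ((m : Fin N) → Fin (I m)) → TubalScalar p)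
    (rest : (m : {m // m ≠ n}) → Fin (I m)) : Fin (I n) → TubalScalar p :=
  fun i => A ((Equiv.piSplitAt n _).symm (i, rest))

variable (L : TubalScalar p ≃ₗ[ℂ] TubalScalar p) (A : ((m : Fin N) → Fin (I m)) → TubalScalar p)

theorem modeProd_modeProdIndexEquiv_symm {J : ℕ} (U : Fin J → Fin (I n) → TubalScalar p)
    (j : Fin J) (rest : (m : {m // m ≠ n}) → Fin (I m)) :
    modeProd L I A n J U ((modeProdIndexEquiv I n J).symm (j, rest))
      = ∑ i, tmul L (modeFibre I n A rest i) (U j i) := by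
  refine Finset.sum_congr rfl fun i _ => ?_
  congr 2
  · funext m
    by_cases h : m = n
    · subst h
      simp [Equiv.piSplitAt]
    · simp [modeProdIndexEquiv, Equiv.piSplitAt, h]
  · simp [modeProdIndexEquiv, Equiv.piSplitAt]

theorem sum_norm_sq_apply_modeProd {J : ℕ} (U : Fin J → Fin (I n) → TubalScalar p)
    (k : Fin p) :
    ∑ idx, ‖L (modeProd L I A n J U idx) k‖ ^ 2
      = ∑ rest, ∑ j, ‖(frontalSlice L U k *ᵥ fun i => L (modeFibre I n A rest i) k) j‖ ^ 2 := by
  rw [← (modeProdIndexEquiv I n J).symm.sum_comp, Fintype.sum_prod_type, Finset.sum_comm]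
  refine Finset.sum_congr rfl fun rest _ => Finset.sum_congr rfl fun j _ => ?_
  simp only [modeProd_modeProdIndexEquiv_symm, map_sum, Finset.sum_apply, apply_tmul,
    Pi.mul_apply, Matrix.mulVec, dotProduct, frontalSlice, Matrix.of_apply, mul_comm]

theorem sum_norm_sq_apply_eq_sum_modeFibre (k : Fin p) :
    ∑ idx, ‖L (A idx) k‖ ^ 2 = ∑ rest, ∑ i, ‖L (modeFibre I n A rest i) k‖ ^ 2 := by
  rw [← (Equiv.piSplitAt n _).symm.sum_comp, Fintype.sum_prod_type, Finset.sum_comm]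
  rfl

theorem sum_norm_sq_apply_modeProd_add_one_sub {M : Fin (I n) → Fin (I n) → TubalScalar p}
    {k : Fin p} (hM : IsStarProjection (frontalSlice L M k)) :
    ∑ idx, ‖L (modeProd L I A n (I n) M idx) k‖ ^ 2
      + ∑ idx, ‖L (modeProd L I A n (I n) (tId L - M) idx) k‖ ^ 2
      = ∑ idx, ‖L (A idx) k‖ ^ 2 := by
  rw [sum_norm_sq_apply_modeProd, sum_norm_sq_apply_modeProd,
    sum_norm_sq_apply_eq_sum_modeFibre, ← Finset.sum_add_distrib, frontalSlice_sub,
    frontalSlice_tId]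
  exact Finset.sum_congr rfl fun rest _ =>
    Matrix.sum_norm_sq_mulVec_add_sum_norm_sq_one_sub_mulVec hM _

end ModeProduct

theorem modeProd_projection_pythagoras_general {N : ℕ}
    (L : TubalScalar p ≃ₗ[ℂ] TubalScalar p)
    (c : ℂ) (W : TubalScalar p →ₗ[ℂ] TubalScalar p) (hc : c ≠ 0)
    (hW : ∀ x y : TubalScalar p, ∑ k, star (W x k) * W y k = ∑ k, star (x k) * y k)
    (hLW : ∀ x, L x = c • W x)
    (I : Fin N → ℕ) (A : ((m : Fin N) → Fin (I m)) → TubalScalar p)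
    (n : Fin N) (R : ℕ)
    (Ub : Fin (I n) → Fin R → TubalScalar p)
    (hPU : tMul L (tHerm L Ub) Ub = tId L) :
    tnorm (modeProd L I A n (I n) (tMul L Ub (tHerm L Ub))) ^ 2
        + tnorm (modeProd L I A n (I n) (tId L - tMul L Ub (tHerm L Ub))) ^ 2
      = tnorm A ^ 2 ∧
    tnorm (modeProd L I A n (I n) (tMul L Ub (tHerm L Ub))) ≤ tnorm A := by
  have hc2 : ‖c‖ ^ 2 ≠ 0 := pow_ne_zero 2 (norm_ne_zero_iff.mpr hc)
  have hpyth : tnorm (modeProd L I A n (I n) (tMul L Ub (tHerm L Ub))) ^ 2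
      + tnorm (modeProd L I A n (I n) (tId L - tMul L Ub (tHerm L Ub))) ^ 2 = tnorm A ^ 2 := by
    refine mul_left_cancel₀ hc2 ?_
    rw [mul_add, sq_norm_mul_tnorm_sq hW hLW, sq_norm_mul_tnorm_sq hW hLW,
      sq_norm_mul_tnorm_sq hW hLW, ← Finset.sum_add_distrib]
    exact Finset.sum_congr rfl fun k _ => sum_norm_sq_apply_modeProd_add_one_sub I n L A
      (isStarProjection_frontalSlice_tMul_tHerm L hPU k)
  exact ⟨hpyth, (sq_le_sq₀ (tnorm_nonneg _) (tnorm_nonneg _)).mp <|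
    hpyth ▸ le_add_of_nonneg_right (sq_nonneg _)⟩

theorem modeProd_projection_pythagoras {N : ℕ}
    (L : TubalScalar p ≃ₗ[ℂ] TubalScalar p)
    (c : ℂ) (W : TubalScalar p →ₗ[ℂ] TubalScalar p) (hc : c ≠ 0)
    (hW : ∀ x y : TubalScalar p, ∑ k, star (W x k) * W y k = ∑ k, star (x k) * y k)
    (hLW : ∀ x, L x = c • W x)
    (I : Fin N → ℕ) (A : ((m : Fin N) → Fin (I m)) → TubalScalar p)
    (n : Fin N) (R : ℕ) (hR : R ≤ I n)
    (Ub : Fin (I n) → Fin R → TubalScalar p)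
    (hPU : tMul L (tHerm L Ub) Ub = tId L) :
    tnorm (modeProd L I A n (I n) (tMul L Ub (tHerm L Ub))) ^ 2
        + tnorm (modeProd L I A n (I n) (tId L - tMul L Ub (tHerm L Ub))) ^ 2
      = tnorm A ^ 2 ∧
    tnorm (modeProd L I A n (I n) (tMul L Ub (tHerm L Ub))) ≤ tnorm A :=
  modeProd_projection_pythagoras_general L c W hc hW hLW I A n R Ub hPU
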